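/- For every natural number N ≥ 1, the second derivative of G_N at any t > e_{[N-1]} equals (1/t) · (∏_{j=1}^{N-1} 1/log_{[j]}(t)) · (1 − ∑_{k=1}^{N-1} ∏_{s=1}^{k} 1/log_{[s]}(t)), and this quantity is strictly positive. -/

import Mathlib

/-!
Write `L_j = log_[j]`, `Q_m = ∏_{j=1}^m 1/L_j` (`iterLogInvProd`) and `S_m = ∑_{k=1}^m Q_k`
(`iterLogInvProdSum`). The chain rule gives
`L_{m+1}' = Q_m / t`, hence `G_{m+1}' = L_{m+1} + Q_m`, and differentiating
`Q_{m+1} = Q_m / L_{m+1}` gives inductively `Q_m' = -(Q_m / t) S_m`; together `G_{m+1}'' = (Q_m / t)(1 - S_m)`.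
For positivity, `S_{m+1}(t) = (1 + S_m(log t)) / log t`, so induction on `m` along `t ↦ log t`
yields `1 + S_m(t) < t` for `t > e_[m]`, and then `S_m(t) < 1`.
-/

/-- Tower of exponentials: `e_[0] = 1`, `e_[N] = exp (e_[N-1])`. -/
noncomputable def towerE : ℕ → ℝ
  | 0 => 1
  | n + 1 => Real.exp (towerE n)

/-- `N`-fold iterated logarithm. -/
noncomputable def iterLog (N : ℕ) (t : ℝ) : ℝ := Real.log^[N] t

/-- `G_N(t) = 0` for `t ≤ e_[N-1]` and `G_N(t) = t · log_[N](t)` for `t > e_[N-1]`. -/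
noncomputable def G (N : ℕ) (t : ℝ) : ℝ :=
  if t ≤ towerE (N - 1) then 0 else t * iterLog N t

open Filter Topology

lemma one_le_towerE (n : ℕ) : 1 ≤ towerE n := by
  induction n with
  | zero => simp [towerE]
  | succ n ih => exact Real.one_le_exp (zero_le_one.trans ih)

lemma towerE_pos (n : ℕ) : 0 < towerE n := zero_lt_one.trans_le (one_le_towerE n)

lemma two_lt_towerE_succ (n : ℕ) : 2 < towerE (n + 1) :=
  calc (2 : ℝ) = 1 + 1 := by norm_num
    _ < Real.exp 1 := Real.add_one_lt_exp one_ne_zero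
    _ ≤ Real.exp (towerE n) := Real.exp_le_exp.mpr (one_le_towerE n)

lemma towerE_lt_log {n : ℕ} {t : ℝ} (ht : towerE (n + 1) < t) : towerE n < Real.log t :=
  (Real.lt_log_iff_exp_lt ((Real.exp_pos _).trans ht)).mpr ht

lemma iterLog_zero (t : ℝ) : iterLog 0 t = t := rfl

lemma iterLog_one : iterLog 1 = Real.log := rfl

lemma iterLog_succ (n : ℕ) (t : ℝ) : iterLog (n + 1) t = iterLog n (Real.log t) :=
  Function.iterate_succ_apply _ _ _

lemma iterLog_succ' (n : ℕ) : iterLog (n + 1) = fun t => Real.log (iterLog n t) :=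
  funext fun _ => Function.iterate_succ_apply' _ _ _

lemma towerE_lt_iterLog {n j : ℕ} {t : ℝ} (ht : towerE (n + j) < t) : towerE n < iterLog j t := by
  induction j generalizing t with
  | zero => exact ht
  | succ j ih => exact iterLog_succ j t ▸ ih (towerE_lt_log ht)

lemma iterLog_pos {m j : ℕ} {t : ℝ} (hj : j ≤ m) (ht : towerE m < t) : 0 < iterLog j t :=
  (towerE_pos (m - j)).trans (towerE_lt_iterLog (by rwa [Nat.sub_add_cancel hj]))

noncomputable def iterLogInvProd (m : ℕ) (t : ℝ) : ℝ := ∏ j ∈ Finset.Icc 1 m, (iterLog j t)⁻¹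

noncomputable def iterLogInvProdSum (m : ℕ) (t : ℝ) : ℝ := ∑ k ∈ Finset.Icc 1 m, iterLogInvProd k t

@[simp]
lemma iterLogInvProd_zero (t : ℝ) : iterLogInvProd 0 t = 1 := rfl

lemma iterLogInvProd_succ (m : ℕ) (t : ℝ) :
    iterLogInvProd (m + 1) t = iterLogInvProd m t * (iterLog (m + 1) t)⁻¹ :=
  Finset.prod_Icc_succ_top (by omega) _

@[simp]
lemma iterLogInvProdSum_zero (t : ℝ) : iterLogInvProdSum 0 t = 0 := rfl

lemma iterLogInvProdSum_succ (m : ℕ) (t : ℝ) :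
    iterLogInvProdSum (m + 1) t = iterLogInvProdSum m t + iterLogInvProd (m + 1) t :=
  Finset.sum_Icc_succ_top (by omega) _

lemma iterLogInvProd_pos {m : ℕ} {t : ℝ} (ht : towerE m < t) : 0 < iterLogInvProd m t :=
  Finset.prod_pos fun _ hj => inv_pos.mpr (iterLog_pos (Finset.mem_Icc.mp hj).2 ht)

lemma iterLogInvProd_succ_eq_log (m : ℕ) (t : ℝ) :
    iterLogInvProd (m + 1) t = (Real.log t)⁻¹ * iterLogInvProd m (Real.log t) := by
  induction m with
  | zero => simp [iterLogInvProd_succ, iterLog_one]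
  | succ m ih => rw [iterLogInvProd_succ, ih, iterLogInvProd_succ, iterLog_succ, mul_assoc]

lemma iterLogInvProdSum_succ_eq_log (m : ℕ) (t : ℝ) :
    iterLogInvProdSum (m + 1) t = (Real.log t)⁻¹ * (1 + iterLogInvProdSum m (Real.log t)) := by
  induction m with
  | zero => simp [iterLogInvProdSum_succ, iterLogInvProd_succ_eq_log]
  | succ m ih =>
    rw [iterLogInvProdSum_succ, ih, iterLogInvProd_succ_eq_log, iterLogInvProdSum_succ]
    ring

lemma one_add_iterLogInvProdSum_lt {m : ℕ} {t : ℝ} (ht : towerE m < t) :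
    1 + iterLogInvProdSum m t < t := by
  induction m generalizing t with
  | zero => simpa [towerE] using ht
  | succ m ih =>
    have hlog := towerE_lt_log ht
    have hlog_pos : 0 < Real.log t := (towerE_pos m).trans hlog
    have hS : iterLogInvProdSum (m + 1) t < 1 := by
      rw [iterLogInvProdSum_succ_eq_log, inv_mul_lt_one₀ hlog_pos]
      exact ih hlog
    linarith [two_lt_towerE_succ m]

lemma iterLogInvProdSum_lt_one {m : ℕ} {t : ℝ} (ht : towerE m < t) : iterLogInvProdSum m t < 1 := by
  cases m with
  | zero => simp
  | succ m =>
    have hlog := towerE_lt_log ht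
    rw [iterLogInvProdSum_succ_eq_log,
      inv_mul_lt_one₀ ((towerE_pos m).trans hlog)]
    exact one_add_iterLogInvProdSum_lt hlog

section Derivatives

variable {m : ℕ} {t : ℝ}

lemma hasDerivAt_iterLog_succ (h : ∀ j ≤ m, iterLog j t ≠ 0) :
    HasDerivAt (iterLog (m + 1)) (t⁻¹ * iterLogInvProd m t) t := by
  induction m with
  | zero => simpa [iterLog_one, iterLog_zero] using Real.hasDerivAt_log (h 0 le_rfl)
  | succ m ih =>
    rw [iterLog_succ' (m + 1)]
    convert (ih fun j hj => h j (hj.trans m.le_succ)).log (h (m + 1) le_rfl) using 1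
    rw [iterLogInvProd_succ, div_eq_mul_inv, mul_assoc]

lemma hasDerivAt_iterLogInvProd (h : ∀ j ≤ m, iterLog j t ≠ 0) :
    HasDerivAt (iterLogInvProd m) (-(t⁻¹ * iterLogInvProd m t * iterLogInvProdSum m t)) t := by
  induction m with
  | zero =>
    refine (hasDerivAt_const t (1 : ℝ)).congr_deriv ?_
    simp
  | succ m ih =>
    have hL := h (m + 1) le_rfl
    have hprod := (ih fun j hj => h j (hj.trans m.le_succ)).mul
      ((hasDerivAt_iterLog_succ fun j hj => h j (hj.trans m.le_succ)).inv hL)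
    have hfun : iterLogInvProd (m + 1) = iterLogInvProd m * (iterLog (m + 1))⁻¹ :=
      funext fun x => iterLogInvProd_succ m x
    rw [iterLogInvProdSum_succ, hfun]
    refine hprod.congr_deriv ?_
    simp only [Pi.mul_apply, Pi.inv_apply]
    field_simp
    ring

lemma G_succ_eventuallyEq (ht : towerE m < t) :
    G (m + 1) =ᶠ[𝓝 t] fun x => x * iterLog (m + 1) x :=
  eventually_gt_nhds ht |>.mono fun x hx => by simp [G, not_le.mpr hx]

lemma deriv_G_succ_eventuallyEq (ht : towerE m < t) :
    deriv (G (m + 1)) =ᶠ[𝓝 t] fun x => iterLog (m + 1) x + iterLogInvProd m x := by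
  filter_upwards [eventually_gt_nhds ht] with x hx
  have hx0 : x ≠ 0 := (iterLog_pos (Nat.zero_le m) hx).ne'
  rw [(G_succ_eventuallyEq hx).deriv_eq]
  have hd := (hasDerivAt_id' x).fun_mul
    (hasDerivAt_iterLog_succ fun j hj => (iterLog_pos hj hx).ne')
  rw [hd.deriv, one_mul, mul_inv_cancel_left₀ hx0]

end Derivatives

theorem second_deriv_G (N : ℕ) (hN : 1 ≤ N) (t : ℝ) (ht : towerE (N - 1) < t) :
    deriv (deriv (G N)) t =
      (1 / t) * (∏ j ∈ Finset.Icc 1 (N - 1), (iterLog j t)⁻¹) *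
        (1 - ∑ k ∈ Finset.Icc 1 (N - 1), ∏ s ∈ Finset.Icc 1 k, (iterLog s t)⁻¹) ∧
    0 < (1 / t) * (∏ j ∈ Finset.Icc 1 (N - 1), (iterLog j t)⁻¹) *
        (1 - ∑ k ∈ Finset.Icc 1 (N - 1), ∏ s ∈ Finset.Icc 1 k, (iterLog s t)⁻¹) := by
  obtain ⟨m, rfl⟩ : ∃ m, N = m + 1 := ⟨N - 1, by omega⟩
  rw [Nat.add_sub_cancel] at ht ⊢
  change deriv (deriv (G (m + 1))) t = 1 / t * iterLogInvProd m t * (1 - iterLogInvProdSum m t) ∧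
    0 < 1 / t * iterLogInvProd m t * (1 - iterLogInvProdSum m t)
  have hne : ∀ j ≤ m, iterLog j t ≠ 0 := fun j hj => (iterLog_pos hj ht).ne'
  have hderiv := (hasDerivAt_iterLog_succ hne).fun_add (hasDerivAt_iterLogInvProd hne)
  refine ⟨?_, ?_⟩
  · rw [(deriv_G_succ_eventuallyEq ht).deriv_eq, hderiv.deriv]
    ring
  · have ht0 : 0 < t := iterLog_pos (Nat.zero_le m) ht
    have hS := iterLogInvProdSum_lt_one ht
    exact mul_pos (mul_pos (one_div_pos.mpr ht0) (iterLogInvProd_pos ht)) (by linarith)
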